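/- arXiv:2107.06216 — 4 statements merged into one kernel-verified Lean document; each statement's English description precedes it below -/
import Mathlib

section
/- Let s_1 ≥ s_2 ≥ ⋯ ≥ s_m ≥ 0 be real machine speeds, set S_k := s_1 + ⋯ + s_{min(k,m)}, and let L_1, …, L_n ≥ 0 be processing rates for n tasks such that for every subset V of tasks, ∑_{v ∈ V} L_v ≤ S_{|V|}. Then there exists a fractional assignment x : {1,…,n} × {1,…,m} → [0,∞) such that ∑_{i=1}^m x_{v,i} ≤ 1 for every task v, ∑_{v=1}^n x_{v,i} ≤ 1 for every machine i, and ∑_{i=1}^m x_{v,i}·s_i ≥ L_v for every task v. -/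
/-!
Induction on the set of tasks, removing one task `v₀` at a time; machines are indexed by `ℕ`,
with speed `0` from `M` on. A task with `L v₀ ≤ 0` gets nothing. Otherwise the zero speed at `M`
and `L v₀ ≤ t 0` give consecutive machines with `t (j + 1) ≤ L v₀ ≤ t j`, so
`L v₀ = α t j + (1 - α) t (j + 1)` with `α ∈ [0, 1]`. Task `v₀` runs the fraction `α` of the
time on `j` and `1 - α` on `j + 1`; the remaining time, `1 - α` of `j` and `α` of `j + 1`, is one
virtual machine of speed `t j + t (j + 1) - L v₀` replacing both. This removes one machine and
exactly `L v₀` from every prefix sum of speeds past `j`, so the remaining tasks still satisfy the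
prefix condition, and their schedule on the virtual machines spreads back to the real ones.
-/

open Finset

namespace MachineMerge

variable (j : ℕ) (α : ℝ)

def mergeSpeeds (c : ℕ → ℝ) (i : ℕ) : ℝ :=
  if i < j then c i else if i = j then (1 - α) * c j + α * c (j + 1) else c (i + 1)

def spreadRow (g : ℕ → ℝ) (i : ℕ) : ℝ :=
  if i < j then g i else if i = j then (1 - α) * g j else if i = j + 1 then α * g j
    else g (i - 1)

def pairRow (i : ℕ) : ℝ :=
  (if i = j then α else 0) + (if i = j + 1 then 1 - α else 0)

theorem sum_spreadRow_mul {N : ℕ} (hjN : j < N) (g c : ℕ → ℝ) :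
    ∑ i ∈ range (N + 1), spreadRow j α g i * c i = ∑ i ∈ range N, g i * mergeSpeeds j α c i := by
  obtain ⟨r, rfl⟩ := Nat.exists_eq_add_of_lt hjN
  rw [show j + r + 1 + 1 = j + (r + 2) by omega, show j + r + 1 = j + (r + 1) by omega,
    sum_range_add _ j (r + 2), sum_range_add _ j (r + 1), sum_range_succ', sum_range_succ',
    sum_range_succ']
  have below : ∀ i ∈ range j, spreadRow j α g i * c i = g i * mergeSpeeds j α c i := by
    intro i hi
    have hij : i < j := mem_range.mp hi
    simp [spreadRow, mergeSpeeds, hij]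
  have above : ∀ l ∈ range r,
      spreadRow j α g (j + (l + 1 + 1)) * c (j + (l + 1 + 1)) =
        g (j + (l + 1)) * mergeSpeeds j α c (j + (l + 1)) := by
    intro l _
    simp only [spreadRow, mergeSpeeds, if_neg (show ¬ j + (l + 1 + 1) < j by omega),
      if_neg (show j + (l + 1 + 1) ≠ j by omega), if_neg (show j + (l + 1 + 1) ≠ j + 1 by omega),
      if_neg (show ¬ j + (l + 1) < j by omega), if_neg (show j + (l + 1) ≠ j by omega)]
    congr 2
  rw [sum_congr rfl below, sum_congr rfl above]
  simp [spreadRow, mergeSpeeds]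
  ring

theorem pairRow_add_spreadRow_one (i : ℕ) :
    pairRow j α i + spreadRow j α (fun _ => 1) i = 1 := by
  unfold pairRow spreadRow
  split_ifs <;> first | omega | ring

theorem sum_pairRow_mul {N : ℕ} (hjN : j + 1 < N) (c : ℕ → ℝ) :
    ∑ i ∈ range N, pairRow j α i * c i = α * c j + (1 - α) * c (j + 1) := by
  simp [pairRow, add_mul, sum_add_distrib, ite_mul, hjN, (by omega : j < N)]

theorem mergeSpeeds_one : mergeSpeeds j α (fun _ => 1) = fun _ => 1 := by
  funext _
  unfold mergeSpeeds
  split_ifs <;> ring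

theorem sum_range_mergeSpeeds_of_le {k : ℕ} (hk : k ≤ j) (c : ℕ → ℝ) :
    ∑ i ∈ range k, mergeSpeeds j α c i = ∑ i ∈ range k, c i :=
  sum_congr rfl fun _ hi => if_pos ((mem_range.mp hi).trans_le hk)

theorem sum_range_mergeSpeeds_of_lt {k : ℕ} (hk : j < k) (c : ℕ → ℝ) :
    ∑ i ∈ range k, mergeSpeeds j α c i =
      ∑ i ∈ range (k + 1), c i - (α * c j + (1 - α) * c (j + 1)) := by
  have h := sum_spreadRow_mul j α hk (fun _ => 1) c
  simp only [one_mul] at h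
  rw [← h, ← sum_pairRow_mul j α (by omega : j + 1 < k + 1), eq_sub_iff_add_eq, ← sum_add_distrib]
  refine sum_congr rfl fun i _ => ?_
  rw [← add_mul, add_comm, pairRow_add_spreadRow_one, one_mul]

theorem sum_spreadRow_mul_of_eq_zero {M : ℕ} (hjM : j < M) (g : ℕ → ℝ) {c : ℕ → ℝ}
    (hc : c M = 0) :
    ∑ i ∈ range M, spreadRow j α g i * c i = ∑ i ∈ range M, g i * mergeSpeeds j α c i := by
  rw [← sum_spreadRow_mul j α hjM, sum_range_succ, hc, mul_zero, add_zero]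

theorem sum_pairRow_mul_of_eq_zero {M : ℕ} (hjM : j < M) {c : ℕ → ℝ} (hc : c M = 0) :
    ∑ i ∈ range M, pairRow j α i * c i = α * c j + (1 - α) * c (j + 1) := by
  rw [← sum_pairRow_mul j α (by omega : j + 1 < M + 1), sum_range_succ, hc, mul_zero, add_zero]

theorem mergeSpeeds_eq_zero {M : ℕ} (hjM : j < M) {c : ℕ → ℝ} (hc : ∀ i, M ≤ i → c i = 0)
    {i : ℕ} (hi : M ≤ i) : mergeSpeeds j α c i = 0 := by
  rw [mergeSpeeds, if_neg (by omega), if_neg (by omega), hc _ (by omega)]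

variable {j α}

theorem spreadRow_mono (hα₀ : 0 ≤ α) (hα₁ : α ≤ 1) {g g' : ℕ → ℝ} (h : ∀ i, g i ≤ g' i)
    (i : ℕ) : spreadRow j α g i ≤ spreadRow j α g' i := by
  unfold spreadRow
  split_ifs
  · exact h i
  · exact mul_le_mul_of_nonneg_left (h j) (by linarith)
  · exact mul_le_mul_of_nonneg_left (h j) hα₀
  · exact h (i - 1)

theorem spreadRow_nonneg (hα₀ : 0 ≤ α) (hα₁ : α ≤ 1) {g : ℕ → ℝ} (h : ∀ i, 0 ≤ g i) (i : ℕ) :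
    0 ≤ spreadRow j α g i := by
  simpa [spreadRow] using spreadRow_mono hα₀ hα₁ h i

theorem pairRow_nonneg (hα₀ : 0 ≤ α) (hα₁ : α ≤ 1) (i : ℕ) : 0 ≤ pairRow j α i := by
  unfold pairRow
  split_ifs <;> linarith

theorem sum_spreadRow {ι : Type*} (T : Finset ι) (x : ι → ℕ → ℝ) (i : ℕ) :
    ∑ v ∈ T, spreadRow j α (x v) i = spreadRow j α (fun i => ∑ v ∈ T, x v i) i := by
  unfold spreadRow
  split_ifs <;> simp [mul_sum]

end MachineMerge

variable {ι : Type*}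

structure IsFractionalSchedule (T : Finset ι) (M : ℕ) (x : ι → ℕ → ℝ) : Prop where
  nonneg : ∀ v i, 0 ≤ x v i
  sum_row_le_one : ∀ v, ∑ i ∈ range M, x v i ≤ 1
  sum_col_le_one : ∀ i, ∑ v ∈ T, x v i ≤ 1

def PrefixFeasible (t : ℕ → ℝ) (T : Finset ι) (y : ι → ℝ) : Prop :=
  ∀ V ⊆ T, ∑ v ∈ V, y v ≤ ∑ i ∈ range #V, t i

namespace IsFractionalSchedule

variable [DecidableEq ι] {T : Finset ι} {M : ℕ} {x : ι → ℕ → ℝ} {v₀ : ι}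

theorem update_zero (hx : IsFractionalSchedule T M x) (hv₀ : v₀ ∉ T) :
    IsFractionalSchedule (insert v₀ T) M (Function.update x v₀ 0) where
  nonneg v i := by
    rcases eq_or_ne v v₀ with rfl | hv
    · simp
    · simpa [hv] using hx.nonneg v i
  sum_row_le_one v := by
    rcases eq_or_ne v v₀ with rfl | hv
    · simp
    · simpa [hv] using hx.sum_row_le_one v
  sum_col_le_one i := by
    rw [sum_insert hv₀, Function.update_self, Pi.zero_apply, zero_add]
    refine le_of_eq_of_le (sum_congr rfl fun v hv => ?_) (hx.sum_col_le_one i)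
    rw [Function.update_of_ne (ne_of_mem_of_not_mem hv hv₀)]

open MachineMerge in
theorem spread {j : ℕ} {α : ℝ} (hx : IsFractionalSchedule T M x) (hv₀ : v₀ ∉ T) (hjM : j < M)
    (hα₀ : 0 ≤ α) (hα₁ : α ≤ 1) :
    IsFractionalSchedule (insert v₀ T) M
      (Function.update (fun v => spreadRow j α (x v)) v₀ (pairRow j α)) where
  nonneg v i := by
    rcases eq_or_ne v v₀ with rfl | hv
    · simpa using pairRow_nonneg hα₀ hα₁ i
    · simpa [hv] using spreadRow_nonneg hα₀ hα₁ (hx.nonneg v) i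
  sum_row_le_one v := by
    have extend {f : ℕ → ℝ} (hf : ∀ i, 0 ≤ f i) :
        ∑ i ∈ range M, f i ≤ ∑ i ∈ range (M + 1), f i * 1 := by
      simpa [sum_range_succ] using hf M
    rcases eq_or_ne v v₀ with rfl | hv
    · calc _ ≤ ∑ i ∈ range (M + 1), pairRow j α i * 1 := by
            simpa using extend (pairRow_nonneg hα₀ hα₁)
        _ = 1 := by rw [sum_pairRow_mul j α (by omega)]; ring
    · calc _ ≤ ∑ i ∈ range (M + 1), spreadRow j α (x v) i * 1 := by
            simpa [hv] using extend (spreadRow_nonneg hα₀ hα₁ (hx.nonneg v))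
        _ = ∑ i ∈ range M, x v i := by
          rw [sum_spreadRow_mul j α hjM, mergeSpeeds_one]; simp
        _ ≤ 1 := hx.sum_row_le_one v
  sum_col_le_one i := by
    rw [sum_insert hv₀, Function.update_self]
    calc _ = pairRow j α i + spreadRow j α (fun i => ∑ v ∈ T, x v i) i := by
          rw [← sum_spreadRow]
          congr 1
          exact sum_congr rfl fun v hv => by
            rw [Function.update_of_ne (ne_of_mem_of_not_mem hv hv₀)]
      _ ≤ pairRow j α i + spreadRow j α (fun _ => 1) i := by
          gcongr
          exact spreadRow_mono hα₀ hα₁ hx.sum_col_le_one i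
      _ = 1 := pairRow_add_spreadRow_one j α i

end IsFractionalSchedule

namespace PrefixFeasible

variable {t : ℕ → ℝ} {T : Finset ι} {y : ι → ℝ}

theorem mono {S : Finset ι} (h : PrefixFeasible t S y) (hTS : T ⊆ S) : PrefixFeasible t T y :=
  fun V hV => h V (hV.trans hTS)

theorem le_head (h : PrefixFeasible t T y) {v : ι} (hv : v ∈ T) : y v ≤ t 0 := by
  simpa using h {v} (singleton_subset_iff.mpr hv)

open MachineMerge in
theorem mergeSpeeds [DecidableEq ι] {v₀ : ι} {j : ℕ} {α : ℝ}
    (h : PrefixFeasible t (insert v₀ T) y) (hv₀ : v₀ ∉ T)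
    (hv₀_rate : α * t j + (1 - α) * t (j + 1) = y v₀) :
    PrefixFeasible (mergeSpeeds j α t) T y := by
  intro V hV
  rcases le_or_gt #V j with hVj | hVj
  · rw [sum_range_mergeSpeeds_of_le j α hVj]
    exact h V (hV.trans (subset_insert _ _))
  · have hv₀V : v₀ ∉ V := fun hv => hv₀ (hV hv)
    have := h (insert v₀ V) (insert_subset_insert _ hV)
    rw [sum_insert hv₀V, card_insert_of_notMem hv₀V] at this
    rw [sum_range_mergeSpeeds_of_lt j α hVj, hv₀_rate]
    linarith

end PrefixFeasible

theorem exists_apply_succ_le_le_apply {α : Type*} [LinearOrder α] {t : ℕ → α} {c : α}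
    (h₀ : c ≤ t 0) {n : ℕ} (hn : t (n + 1) ≤ c) : ∃ j, t (j + 1) ≤ c ∧ c ≤ t j := by
  induction n with
  | zero => exact ⟨0, hn, h₀⟩
  | succ n ih =>
    by_cases hc : t (n + 1) ≤ c
    · exact ih hc
    · exact ⟨n + 1, hn, (not_le.mp hc).le⟩

open MachineMerge in
theorem exists_isFractionalSchedule_of_prefixFeasible (M : ℕ) (y : ι → ℝ) (T : Finset ι)
    (t : ℕ → ℝ) (ht : ∀ i, M ≤ i → t i = 0) (hfeas : PrefixFeasible t T y) :
    ∃ x, IsFractionalSchedule T M x ∧ ∀ v ∈ T, y v ≤ ∑ i ∈ range M, x v i * t i := by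
  classical
  induction T using Finset.induction_on generalizing t with
  | empty => exact ⟨0, ⟨fun _ _ => le_rfl, by simp, by simp⟩, by simp⟩
  | insert v₀ T hv₀ ih =>
    by_cases hy : y v₀ ≤ 0
    · obtain ⟨x, hx, hrate⟩ := ih t ht (hfeas.mono (subset_insert _ _))
      refine ⟨_, hx.update_zero hv₀, fun v hv => ?_⟩
      rcases eq_or_ne v v₀ with rfl | hne
      · simpa using hy
      · simpa [hne] using hrate v ((mem_insert.mp hv).resolve_left hne)
    obtain ⟨j, hj₁, hj⟩ := exists_apply_succ_le_le_apply
      (hfeas.le_head (mem_insert_self v₀ T)) (n := M) (by rw [ht _ (by omega)]; linarith)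
    have hjM : j < M := by
      by_contra! hMj
      linarith [ht j hMj]
    obtain ⟨β, α, hβ, hα, hβα, hconv⟩ := Icc_subset_segment (𝕜 := ℝ) ⟨hj₁, hj⟩
    obtain rfl : β = 1 - α := by linarith
    have hv₀_rate : α * t j + (1 - α) * t (j + 1) = y v₀ := by
      rw [← hconv, smul_eq_mul, smul_eq_mul]; ring
    obtain ⟨x, hx, hrate⟩ := ih (mergeSpeeds j α t) (fun _ => mergeSpeeds_eq_zero j α hjM ht)
      (hfeas.mergeSpeeds hv₀ hv₀_rate)
    refine ⟨_, hx.spread hv₀ hjM hα (by linarith), fun v hv => ?_⟩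
    rcases eq_or_ne v v₀ with rfl | hne
    · simp [sum_pairRow_mul_of_eq_zero j α hjM (ht M le_rfl), hv₀_rate]
    · simpa [hne, sum_spreadRow_mul_of_eq_zero j α hjM _ (ht M le_rfl)]
        using hrate v ((mem_insert.mp hv).resolve_left hne)

theorem sum_range_eq_sum_filter_val_lt {m : ℕ} (s : Fin m → ℝ) {t : ℕ → ℝ}
    (hts : ∀ i : Fin m, t i = s i) (ht : ∀ i, m ≤ i → t i = 0) (k : ℕ) :
    ∑ i ∈ range k, t i = ∑ i ∈ univ.filter (fun i : Fin m => (i : ℕ) < k), s i := by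
  simp_rw [sum_filter, ← hts]
  rw [Fin.sum_univ_eq_sum_range (fun i => if i < k then t i else 0), ← sum_filter,
    ← sum_filter_of_ne fun i _ hi => not_le.mp fun him => hi (ht i him)]
  congr 1
  ext i
  simp only [mem_filter, mem_range]
  omega

theorem stmt_0_general (m n : ℕ) (s : Fin m → ℝ)
    (L : Fin n → ℝ)
    (hfeas : ∀ V : Finset (Fin n),
      ∑ v ∈ V, L v ≤ ∑ i ∈ Finset.univ.filter (fun i : Fin m => (i : ℕ) < V.card), s i) :
    ∃ x : Fin n → Fin m → ℝ,
      (∀ v i, 0 ≤ x v i) ∧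
      (∀ v, ∑ i, x v i ≤ 1) ∧
      (∀ i, ∑ v, x v i ≤ 1) ∧
      (∀ v, L v ≤ ∑ i, x v i * s i) := by
  set t : ℕ → ℝ := fun i => if h : i < m then s ⟨i, h⟩ else 0
  have hts (i : Fin m) : t i = s i := by simp [t]
  have ht (i : ℕ) (hi : m ≤ i) : t i = 0 := by simp [t, hi]
  obtain ⟨x, hx, hrate⟩ := exists_isFractionalSchedule_of_prefixFeasible m L univ t ht fun V _ => by
    simpa only [sum_range_eq_sum_filter_val_lt s hts ht] using hfeas V
  refine ⟨fun v i => x v i, fun v i => hx.nonneg v i, fun v => ?_, fun i => hx.sum_col_le_one i,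
    fun v => ?_⟩
  · simpa only [Fin.sum_univ_eq_sum_range (x v)] using hx.sum_row_le_one v
  · simpa only [← hts, Fin.sum_univ_eq_sum_range (fun i => x v i * t i)]
      using hrate v (mem_univ v)

/-- **Fractional schedule feasibility.** If machine speeds `s 0 ≥ s 1 ≥ ⋯ ≥ s (m-1) ≥ 0`
and task rates `L v ≥ 0` satisfy that the total rate of any subset `V` of tasks is at most
`S (V.card)` (the total speed of the `|V|` fastest machines), then there is a fractional
assignment `x` with row sums and column sums at most `1` giving each task `v` processing
`∑ i, x v i * s i ≥ L v`. -/
theorem stmt_0 (m n : ℕ) (s : Fin m → ℝ)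
    (hs_nonneg : ∀ i, 0 ≤ s i)
    (hs_mono : ∀ i j : Fin m, i ≤ j → s j ≤ s i)
    (L : Fin n → ℝ) (hL : ∀ v, 0 ≤ L v)
    (hfeas : ∀ V : Finset (Fin n),
      ∑ v ∈ V, L v ≤ ∑ i ∈ Finset.univ.filter (fun i : Fin m => (i : ℕ) < V.card), s i) :
    ∃ x : Fin n → Fin m → ℝ,
      (∀ v i, 0 ≤ x v i) ∧
      (∀ v, ∑ i, x v i ≤ 1) ∧
      (∀ i, ∑ v, x v i ≤ 1) ∧
      (∀ v, L v ≤ ∑ i, x v i * s i) :=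
  stmt_0_general m n s L hfeas
end

section
/- Let s : ℕ → ℝ be a nonincreasing sequence of nonnegative speeds with prefix sums S_k := s_1 + ⋯ + s_k, let γ > 0, and let L : T → [0,∞) assign rates to a finite set T of tasks such that every subset U ⊆ T satisfies ∑_{u ∈ U} L_u ≤ γ·S_{|U|}. Suppose V ⊆ T satisfies ∑_{u ∈ V} L_u = γ·S_{|V|} (V is tight), and suppose v ∈ V and v' ∈ T \ V are tasks with L_v = L_{v'}. Then ∑_{u ∈ V ∪ {v'}} L_u = γ·S_{|V|+1}, i.e., V ∪ {v'} is also tight; in particular L_v = γ·s_{|V|} = γ·s_{|V|+1} = L_{v'}. -/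
/-!
Removing `v` from the tight set `V` and adding `v'` to it are both feasible, so the
rate of `v` is at least the capacity gained by the `|V|`-th machine, `γ s_{|V|}`, and the rate
of `v'` is at most the capacity gained by the next one, `γ s_{|V|+1}`. Since speeds are
nonincreasing, `L v = L v'` squeezes all four quantities together.
-/

open Finset

section TightSet

variable {α : Type*} [DecidableEq α] {T V : Finset α} {L : α → ℝ} {c : ℕ → ℝ}

theorem le_rate_of_mem_tight (hfeas : ∀ U ⊆ T, ∑ u ∈ U, L u ≤ c U.card) (hVT : V ⊆ T)
    (htight : ∑ u ∈ V, L u = c V.card) {v : α} (hv : v ∈ V) :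
    c V.card - c (V.card - 1) ≤ L v := by
  have herase := hfeas _ ((erase_subset v V).trans hVT)
  rw [card_erase_of_mem hv] at herase
  linarith [sum_erase_add V L hv]

theorem rate_le_of_notMem_tight (hfeas : ∀ U ⊆ T, ∑ u ∈ U, L u ≤ c U.card) (hVT : V ⊆ T)
    (htight : ∑ u ∈ V, L u = c V.card) {v' : α} (hv'T : v' ∈ T) (hv'V : v' ∉ V) :
    L v' ≤ c (V.card + 1) - c V.card := by
  have hinsert := hfeas _ (insert_subset hv'T hVT)
  rw [card_insert_of_notMem hv'V, sum_insert hv'V] at hinsert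
  linarith

end TightSet

theorem mul_sum_Icc_succ_sub (γ : ℝ) (s : ℕ → ℝ) (k : ℕ) :
    γ * ∑ i ∈ Icc 1 (k + 1), s i - γ * ∑ i ∈ Icc 1 k, s i = γ * s (k + 1) := by
  rw [sum_Icc_succ_top (Nat.le_add_left 1 k)]
  ring

theorem stmt_1_general {α : Type*} [DecidableEq α] (s : ℕ → ℝ)
    (hs_anti : ∀ k l : ℕ, k ≤ l → s l ≤ s k)
    (γ : ℝ) (hγ : 0 < γ)
    (T : Finset α) (L : α → ℝ)
    (hfeas : ∀ U ⊆ T, ∑ u ∈ U, L u ≤ γ * ∑ i ∈ Finset.Icc 1 U.card, s i)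
    (V : Finset α) (hVT : V ⊆ T)
    (htight : ∑ u ∈ V, L u = γ * ∑ i ∈ Finset.Icc 1 V.card, s i)
    (v v' : α) (hv : v ∈ V) (hv'T : v' ∈ T) (hv'V : v' ∉ V)
    (hLeq : L v = L v') :
    (∑ u ∈ insert v' V, L u = γ * ∑ i ∈ Finset.Icc 1 (V.card + 1), s i) ∧
    L v = γ * s V.card ∧
    γ * s V.card = γ * s (V.card + 1) ∧
    γ * s (V.card + 1) = L v' := by
  let c : ℕ → ℝ := fun k => γ * ∑ i ∈ Icc 1 k, s i
  have hc : ∀ k, c (k + 1) - c k = γ * s (k + 1) := mul_sum_Icc_succ_sub γ s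
  have hlow : γ * s V.card ≤ L v := by
    have hstep := hc (V.card - 1)
    rw [Nat.sub_add_cancel (card_pos.mpr ⟨v, hv⟩)] at hstep
    linarith [le_rate_of_mem_tight (c := c) hfeas hVT htight hv]
  have hhigh : L v' ≤ γ * s (V.card + 1) := by
    rw [← hc]
    exact rate_le_of_notMem_tight (c := c) hfeas hVT htight hv'T hv'V
  have hmono : γ * s (V.card + 1) ≤ γ * s V.card :=
    mul_le_mul_of_nonneg_left (hs_anti _ _ V.card.le_succ) hγ.le
  refine ⟨?_, by linarith, by linarith, by linarith⟩
  rw [sum_insert hv'V, htight]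
  linarith [hc V.card]

/-- **Uniform rates, key step.** Speeds `s 1 ≥ s 2 ≥ ⋯ ≥ 0` with prefix sums
`S k = ∑_{i=1}^k s i`. Rates `L` on a finite task set `T` are feasible:
every `U ⊆ T` has `∑_{u ∈ U} L u ≤ γ * S (U.card)`. If `V ⊆ T` is tight,
`v ∈ V`, `v' ∈ T \ V` and `L v = L v'`, then `V ∪ {v'}` is also tight, and
`L v = γ * s |V| = γ * s (|V|+1) = L v'`. -/
theorem stmt_1 {α : Type*} [DecidableEq α] (s : ℕ → ℝ)
    (hs_nonneg : ∀ k, 0 ≤ s k)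
    (hs_anti : ∀ k l : ℕ, k ≤ l → s l ≤ s k)
    (γ : ℝ) (hγ : 0 < γ)
    (T : Finset α) (L : α → ℝ) (hL : ∀ u ∈ T, 0 ≤ L u)
    (hfeas : ∀ U ⊆ T, ∑ u ∈ U, L u ≤ γ * ∑ i ∈ Finset.Icc 1 U.card, s i)
    (V : Finset α) (hVT : V ⊆ T)
    (htight : ∑ u ∈ V, L u = γ * ∑ i ∈ Finset.Icc 1 V.card, s i)
    (v v' : α) (hv : v ∈ V) (hv'T : v' ∈ T) (hv'V : v' ∉ V)
    (hLeq : L v = L v') :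
    (∑ u ∈ insert v' V, L u = γ * ∑ i ∈ Finset.Icc 1 (V.card + 1), s i) ∧
    L v = γ * s V.card ∧
    γ * s V.card = γ * s (V.card + 1) ∧
    γ * s (V.card + 1) = L v' :=
  stmt_1_general s hs_anti γ hγ T L hfeas V hVT htight v v' hv hv'T hv'V hLeq
end

section
/- Under the increasing capacity assumption, let γ ≥ 2K, let ℓ with 1 ≤ ℓ ≤ K and ℓ* with 1 ≤ ℓ* < K be speed classes, and let n > 0 and L > 0 be reals. Suppose either (i) ℓ ≤ ℓ* and L·n ≥ γ·m_{ℓ*}·σ_{ℓ*}, or (ii) ℓ* < ℓ and L·n ≥ γ·(m_1σ_1 + ⋯ + m_{ℓ*}σ_{ℓ*}). Then 1/n ≤ (L/σ_ℓ)·(1/(2K·m_ℓ) + 1/(2K·~m_{ℓ*})). -/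
/-!
Only one of the two summands is needed. If `ℓ ≤ ℓ*`, the capacity assumption gives
`m_ℓ σ_ℓ ≤ m_{ℓ*} σ_{ℓ*}`, so the first summand is already at least `1/n`. If `ℓ* < ℓ`, falling
speeds give `σ_ℓ ≤ σ_{ℓ*+1}`, hence `σ_ℓ ~m_{ℓ*} ≤ m_1 σ_1 + ⋯ + m_{ℓ*} σ_{ℓ*}`, and the second
summand suffices. In both cases `γ ≥ 2K` absorbs the factor `2K`.
-/

/-- Threshold `~m ℓ = (σ 1 * m 1 + ⋯ + σ ℓ * m ℓ) / σ (ℓ+1)`. -/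
noncomputable def tmDef (σ m : ℕ → ℝ) (ℓ : ℕ) : ℝ :=
  (∑ i ∈ Finset.Icc 1 ℓ, σ i * m i) / σ (ℓ + 1)

open Finset

lemma antitoneOn_Icc_of_falling {K : ℕ} {σ : ℕ → ℝ}
    (hσpos : ∀ ℓ, 1 ≤ ℓ → ℓ ≤ K → 0 < σ ℓ)
    (hfall : ∀ ℓ, 1 ≤ ℓ → ℓ < K → 64 * σ (ℓ + 1) ≤ σ ℓ) :
    AntitoneOn σ (Set.Icc 1 K) :=
  antitoneOn_of_add_one_le Set.ordConnected_Icc fun a _ ha ha' => by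
    have := hσpos (a + 1) ha'.1 ha'.2
    linarith [hfall a ha.1 ha'.2]

lemma le_of_two_mul_sum_Icc_le {f : ℕ → ℝ} {a b : ℕ}
    (hf : ∀ i ∈ Icc 1 (b - 1), 0 ≤ f i) (hb : 2 * ∑ i ∈ Icc 1 (b - 1), f i ≤ f b)
    (ha : 1 ≤ a) (hab : a ≤ b) : f a ≤ f b := by
  rcases hab.eq_or_lt with rfl | hlt
  · rfl
  · have hmem : a ∈ Icc 1 (b - 1) := mem_Icc.2 ⟨ha, by omega⟩
    have hsum := single_le_sum hf hmem
    linarith [sum_nonneg hf]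

lemma tmDef_pos {σ m : ℕ → ℝ} {ℓ : ℕ} (hℓ : 1 ≤ ℓ)
    (hpos : ∀ i ∈ Icc 1 ℓ, 0 < m i * σ i) (hσ : 0 < σ (ℓ + 1)) : 0 < tmDef σ m ℓ :=
  div_pos (sum_pos (fun i hi => mul_comm (m i) (σ i) ▸ hpos i hi) ⟨1, mem_Icc.2 ⟨le_rfl, hℓ⟩⟩) hσ

lemma mul_tmDef_le {σ m : ℕ → ℝ} {ℓ : ℕ} {s : ℝ} (hσ : 0 < σ (ℓ + 1))
    (hpos : ∀ i ∈ Icc 1 ℓ, 0 ≤ m i * σ i) (hs : s ≤ σ (ℓ + 1)) :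
    s * tmDef σ m ℓ ≤ ∑ i ∈ Icc 1 ℓ, m i * σ i := by
  rw [tmDef, ← mul_div_assoc, div_le_iff₀ hσ, sum_congr rfl fun i _ => mul_comm (σ i) (m i)]
  exact (mul_le_mul_of_nonneg_right hs (sum_nonneg hpos)).trans_eq (mul_comm _ _)

lemma one_div_le_div_mul_one_div {n L s k d c γ : ℝ} (hn : 0 < n) (hs : 0 < s) (hk : 0 < k)
    (hd : 0 < d) (hsd : s * d ≤ c) (hkγ : k ≤ γ) (hγ : γ * c ≤ L * n) :
    1 / n ≤ L / s * (1 / (k * d)) := by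
  rw [div_mul_div_comm, mul_one, div_le_div_iff₀ hn (by positivity), one_mul]
  have hc : 0 ≤ c := (mul_pos hs hd).le.trans hsd
  calc s * (k * d) = k * (s * d) := by ring
    _ ≤ k * c := by gcongr
    _ ≤ γ * c := by gcongr
    _ ≤ L * n := hγ

/-- Dual-feasibility inequality in the first regime of the single-job analysis. -/
theorem stmt_11 (K : ℕ) (hK : 1 ≤ K) (σ m : ℕ → ℝ)
    (hσpos : ∀ ℓ, 1 ≤ ℓ → ℓ ≤ K → 0 < σ ℓ)
    (hmpos : ∀ ℓ, 1 ≤ ℓ → ℓ ≤ K → 0 < m ℓ)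
    (hfall : ∀ ℓ, 1 ≤ ℓ → ℓ < K → 64 * σ (ℓ + 1) ≤ σ ℓ)
    (hcap : ∀ ℓ, 1 ≤ ℓ → ℓ ≤ K →
      2 * (∑ i ∈ Finset.Icc 1 (ℓ - 1), m i * σ i) ≤ m ℓ * σ ℓ)
    (γ : ℝ) (hγ : 2 * (K : ℝ) ≤ γ)
    (ℓ ℓs : ℕ) (hℓ1 : 1 ≤ ℓ) (hℓK : ℓ ≤ K) (hℓs1 : 1 ≤ ℓs) (hℓsK : ℓs < K)
    (n L : ℝ) (hn : 0 < n) (hLpos : 0 < L)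
    (hcase : (ℓ ≤ ℓs ∧ γ * (m ℓs * σ ℓs) ≤ L * n) ∨
             (ℓs < ℓ ∧ γ * (∑ i ∈ Finset.Icc 1 ℓs, m i * σ i) ≤ L * n)) :
    1 / n ≤ (L / σ ℓ) * (1 / (2 * K * m ℓ) + 1 / (2 * K * tmDef σ m ℓs)) := by
  have hK0 : (0 : ℝ) < K := by exact_mod_cast hK
  have hσℓ := hσpos ℓ hℓ1 hℓK
  have hmℓ := hmpos ℓ hℓ1 hℓK
  have hmσ : ∀ i ∈ Icc 1 ℓs, 0 < m i * σ i := fun i hi => by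
    obtain ⟨h1, h2⟩ := mem_Icc.1 hi
    exact mul_pos (hmpos i h1 (by omega)) (hσpos i h1 (by omega))
  have hσs := hσpos (ℓs + 1) (by omega) hℓsK
  have htm := tmDef_pos hℓs1 hmσ hσs
  rw [mul_add]
  rcases hcase with ⟨hle, hLn⟩ | ⟨hlt, hLn⟩
  · have hmono : m ℓ * σ ℓ ≤ m ℓs * σ ℓs :=
      le_of_two_mul_sum_Icc_le (fun i hi => (hmσ i (Icc_subset_Icc_right (Nat.sub_le ℓs 1) hi)).le)
        (hcap ℓs hℓs1 hℓsK.le) hℓ1 hle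
    exact le_add_of_le_of_nonneg (one_div_le_div_mul_one_div hn hσℓ (by positivity) hmℓ
      ((mul_comm _ _).trans_le hmono) hγ hLn) (by positivity)
  · have hσle : σ ℓ ≤ σ (ℓs + 1) :=
      antitoneOn_Icc_of_falling hσpos hfall ⟨by omega, hℓsK⟩ ⟨hℓ1, hℓK⟩ hlt
    exact le_add_of_nonneg_of_le (by positivity) (one_div_le_div_mul_one_div hn hσℓ
      (by positivity) htm (mul_tmDef_le hσs (fun i hi => (hmσ i hi).le) hσle) hγ hLn)
end

section
/- Under the increasing capacity assumption, let γ ≥ 2K, and let ℓ with 1 ≤ ℓ ≤ K and ℓ* with 1 ≤ ℓ* < K be speed classes. Then 1/~m_{ℓ*} ≤ (γ·σ_{ℓ*+1}/σ_ℓ)·(1/(2K·m_ℓ) + 1/(2K·~m_{ℓ*})). -/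
open Finset

theorem antitoneOn_Icc_of_mul_succ_le {K : ℕ} {σ : ℕ → ℝ} {c : ℝ} (hc : 1 ≤ c)
    (hσpos : ∀ ℓ, 1 ≤ ℓ → ℓ ≤ K → 0 < σ ℓ)
    (hfall : ∀ ℓ, 1 ≤ ℓ → ℓ < K → c * σ (ℓ + 1) ≤ σ ℓ) :
    AntitoneOn σ (Set.Icc 1 K) := by
  refine antitoneOn_of_succ_le Set.ordConnected_Icc fun ℓ _ hℓ hℓ' => ?_
  rw [Order.succ_eq_add_one] at hℓ' ⊢
  have hpos := hσpos (ℓ + 1) hℓ'.1 hℓ'.2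
  nlinarith [hfall ℓ hℓ.1 hℓ'.2]

theorem mul_le_sum_Icc_add {K ℓ ℓs : ℕ} {σ m : ℕ → ℝ} (hσ : AntitoneOn σ (Set.Icc 1 K))
    (hterm : ∀ i ∈ Icc 1 ℓs, 0 ≤ σ i * m i) (hσs : 0 ≤ σ (ℓs + 1)) (hm : 0 ≤ m ℓ)
    (hℓ1 : 1 ≤ ℓ) (hℓK : ℓ ≤ K) (hℓsK : ℓs < K) :
    σ ℓ * m ℓ ≤ ∑ i ∈ Icc 1 ℓs, σ i * m i + σ (ℓs + 1) * m ℓ := by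
  rcases le_or_gt ℓ ℓs with hle | hlt
  · have hsummand : σ ℓ * m ℓ ≤ ∑ i ∈ Icc 1 ℓs, σ i * m i :=
      single_le_sum hterm (mem_Icc.mpr ⟨hℓ1, hle⟩)
    nlinarith
  · have hspeed : σ ℓ ≤ σ (ℓs + 1) := hσ ⟨by omega, by omega⟩ ⟨hℓ1, hℓK⟩ hlt
    have hsum : 0 ≤ ∑ i ∈ Icc 1 ℓs, σ i * m i := sum_nonneg hterm
    nlinarith

theorem one_div_div_le_mul_add {a b s S k γ : ℝ} (ha : 0 < a) (hb : 0 < b) (hs : 0 < s)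
    (hS : 0 < S) (hk : 0 < k) (hkγ : k ≤ γ) (h : a * b ≤ S + s * b) :
    1 / (S / s) ≤ γ * s / a * (1 / (k * b) + 1 / (k * (S / s))) := by
  have hrhs : γ * s / a * (1 / (k * b) + 1 / (k * (S / s))) =
      s / S * (γ * (S + s * b) / (k * (a * b))) := by
    field_simp
  have hfactor : 1 ≤ γ * (S + s * b) / (k * (a * b)) := by
    rw [one_le_div (by positivity)]
    exact mul_le_mul hkγ h (by positivity) (hk.le.trans hkγ)
  rw [hrhs, one_div_div]
  exact le_mul_of_one_le_right (by positivity) hfactor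

theorem stmt_12_general (K : ℕ) (σ m : ℕ → ℝ)
    (hσpos : ∀ ℓ, 1 ≤ ℓ → ℓ ≤ K → 0 < σ ℓ)
    (hmpos : ∀ ℓ, 1 ≤ ℓ → ℓ ≤ K → 0 < m ℓ)
    (hfall : ∀ ℓ, 1 ≤ ℓ → ℓ < K → 64 * σ (ℓ + 1) ≤ σ ℓ)
    (γ : ℝ) (hγ : 2 * (K : ℝ) ≤ γ)
    (ℓ ℓs : ℕ) (hℓ1 : 1 ≤ ℓ) (hℓK : ℓ ≤ K) (hℓs1 : 1 ≤ ℓs) (hℓsK : ℓs < K) :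
    1 / tmDef σ m ℓs ≤
      (γ * σ (ℓs + 1) / σ ℓ) * (1 / (2 * K * m ℓ) + 1 / (2 * K * tmDef σ m ℓs)) := by
  have hterm : ∀ i ∈ Icc 1 ℓs, 0 < σ i * m i := fun i hi => by
    obtain ⟨hi1, hiℓs⟩ := mem_Icc.mp hi
    exact mul_pos (hσpos i hi1 (by omega)) (hmpos i hi1 (by omega))
  have hσs : 0 < σ (ℓs + 1) := hσpos _ (by omega) (by omega)
  have hS : 0 < ∑ i ∈ Icc 1 ℓs, σ i * m i := sum_pos hterm ⟨1, mem_Icc.mpr ⟨le_rfl, hℓs1⟩⟩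
  have hK : (0 : ℝ) < 2 * K := by
    have : 0 < K := by omega
    positivity
  have hkey := mul_le_sum_Icc_add (antitoneOn_Icc_of_mul_succ_le (by norm_num) hσpos hfall)
    (fun i hi => (hterm i hi).le) hσs.le (hmpos ℓ hℓ1 hℓK).le hℓ1 hℓK hℓsK
  exact one_div_div_le_mul_add (hσpos ℓ hℓ1 hℓK) (hmpos ℓ hℓ1 hℓK) hσs hS hK hγ hkey

/-- Dual-feasibility inequality in the second regime of the single-job analysis. -/
theorem stmt_12 (K : ℕ) (hK : 1 ≤ K) (σ m : ℕ → ℝ)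
    (hσpos : ∀ ℓ, 1 ≤ ℓ → ℓ ≤ K → 0 < σ ℓ)
    (hmpos : ∀ ℓ, 1 ≤ ℓ → ℓ ≤ K → 0 < m ℓ)
    (hfall : ∀ ℓ, 1 ≤ ℓ → ℓ < K → 64 * σ (ℓ + 1) ≤ σ ℓ)
    (hcap : ∀ ℓ, 1 ≤ ℓ → ℓ ≤ K →
      2 * (∑ i ∈ Finset.Icc 1 (ℓ - 1), m i * σ i) ≤ m ℓ * σ ℓ)
    (γ : ℝ) (hγ : 2 * (K : ℝ) ≤ γ)
    (ℓ ℓs : ℕ) (hℓ1 : 1 ≤ ℓ) (hℓK : ℓ ≤ K) (hℓs1 : 1 ≤ ℓs) (hℓsK : ℓs < K) :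
    1 / tmDef σ m ℓs ≤
      (γ * σ (ℓs + 1) / σ ℓ) * (1 / (2 * K * m ℓ) + 1 / (2 * K * tmDef σ m ℓs)) :=
  stmt_12_general K σ m hσpos hmpos hfall γ hγ ℓ ℓs hℓ1 hℓK hℓs1 hℓsK
end
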